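/- arXiv:2501.18198 — 4 statements merged into one kernel-verified Lean document; each statement's English description precedes it below -/
import Mathlib

section
/- Let f : R^d → R be differentiable and (L₀, L₁)-smooth, i.e., for all x, y with ‖y - x‖ ≤ 1/L₁, f(y) ≤ f(x) + ⟨∇f(x), y - x⟩ + (L₀ + L₁‖∇f(x)‖)/2 · ‖y - x‖². If f* = inf_x f(x) > -∞, then for every x, ‖∇f(x)‖² ≤ 2(L₀ + L₁‖∇f(x)‖)(f(x) - f*). -/
open scoped RealInnerProductSpace

/-- If `f` is differentiable, `(L₀, L₁)`-smooth (descent-inequality form), and bounded below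
with infimum `f*`, then `‖∇f(x)‖² ≤ 2(L₀ + L₁‖∇f(x)‖)(f(x) - f*)` for every `x`. -/
theorem stmt3 (d : ℕ) (f : EuclideanSpace ℝ (Fin d) → ℝ) (L₀ L₁ fstar : ℝ)
    (hL₀ : 0 ≤ L₀) (hL₁ : 0 < L₁) (hf : Differentiable ℝ f)
    (hsmooth : ∀ x y : EuclideanSpace ℝ (Fin d), ‖y - x‖ ≤ 1 / L₁ →
      f y ≤ f x + ⟪gradient f x, y - x⟫ + (L₀ + L₁ * ‖gradient f x‖) / 2 * ‖y - x‖ ^ 2)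
    (hbdd : BddBelow (Set.range f)) (hfstar : fstar = ⨅ x, f x) :
    ∀ x, ‖gradient f x‖ ^ 2 ≤ 2 * (L₀ + L₁ * ‖gradient f x‖) * (f x - fstar) := by
  intro x
  have hstar : ∀ z, fstar ≤ f z := by
    intro z; rw [hfstar]; exact ciInf_le hbdd z
  set g := gradient f x with hg
  rcases eq_or_lt_of_le (norm_nonneg g) with h0 | h0
  · have : ‖g‖ = 0 := h0.symm
    rw [this]
    have h1 : 0 ≤ f x - fstar := sub_nonneg.mpr (hstar x)
    nlinarith
  · set L : ℝ := L₀ + L₁ * ‖g‖ with hL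
    have hLpos : 0 < L := by positivity
    set y : EuclideanSpace ℝ (Fin d) := x - L⁻¹ • g with hy
    have hyx : y - x = -(L⁻¹ • g) := by simp [hy]
    have hnorm : ‖y - x‖ = L⁻¹ * ‖g‖ := by
      rw [hyx, norm_neg, norm_smul, norm_inv, Real.norm_eq_abs, abs_of_pos hLpos]
    have hclose : ‖y - x‖ ≤ 1 / L₁ := by
      rw [hnorm, one_div]
      rw [inv_mul_le_iff₀ hLpos, ← div_eq_mul_inv, le_div_iff₀ hL₁]
      nlinarith
    have hinner : ⟪g, y - x⟫ = -(L⁻¹ * ‖g‖ ^ 2) := by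
      rw [hyx, inner_neg_right, real_inner_smul_right, real_inner_self_eq_norm_sq]
    have hdesc := hsmooth x y hclose
    rw [hinner, hnorm] at hdesc
    have hfy : fstar ≤ f y := hstar y
    have key : f y ≤ f x - L⁻¹ * ‖g‖ ^ 2 / 2 := by
      have : L / 2 * (L⁻¹ * ‖g‖) ^ 2 = L⁻¹ * ‖g‖ ^ 2 / 2 := by
        field_simp
      calc f y ≤ f x + -(L⁻¹ * ‖g‖ ^ 2) + L / 2 * (L⁻¹ * ‖g‖) ^ 2 := hdesc
        _ = f x - L⁻¹ * ‖g‖ ^ 2 / 2 := by rw [this]; ring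
    have h2 : L⁻¹ * ‖g‖ ^ 2 / 2 ≤ f x - fstar := by linarith
    have h4 : ‖g‖ ^ 2 / 2 ≤ L * (f x - fstar) := by
      have h5 := mul_le_mul_of_nonneg_left h2 hLpos.le
      calc ‖g‖ ^ 2 / 2 = L * (L⁻¹ * ‖g‖ ^ 2 / 2) := by field_simp
        _ ≤ L * (f x - fstar) := h5
    nlinarith [h4]
end

section
/- Let f : R^d → R be convex, differentiable, (L₀,L₁)-smooth, with minimizer x* and f* = f(x*). Consider a deterministic step x⁺ = x - η·∇f(x)/‖∇f(x)‖ with ∇f(x) ≠ 0 and step size η ≤ ‖∇f(x)‖ / (2(L₀ + L₁‖∇f(x)‖)). Then f(x⁺) ≤ f(x) - (η/2)‖∇f(x)‖. Consequently, if ‖x - x*‖ ≤ R, then f(x⁺) - f* ≤ (1 - η/(2R))(f(x) - f*). -/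
open scoped RealInnerProductSpace

/-- Gradient inequality for convex differentiable functions. -/
lemma convex_grad_ineq {d : ℕ} {f : EuclideanSpace ℝ (Fin d) → ℝ}
    (hconv : ConvexOn ℝ Set.univ f) (hf : Differentiable ℝ f)
    (x y : EuclideanSpace ℝ (Fin d)) :
    ⟪gradient f x, y - x⟫ ≤ f y - f x := by
  set g := f ∘ (AffineMap.lineMap x y : ℝ →ᵃ[ℝ] EuclideanSpace ℝ (Fin d)) with hg
  have hgconv : ConvexOn ℝ Set.univ g := by
    have := hconv.comp_affineMap (AffineMap.lineMap x y : ℝ →ᵃ[ℝ] EuclideanSpace ℝ (Fin d))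
    simpa using this
  have hc : HasDerivAt (fun t : ℝ => x + t • (y - x)) (y - x) 0 := by
    simpa using ((hasDerivAt_id (0:ℝ)).smul_const (y - x)).const_add x
  have hgd : HasDerivAt g ⟪gradient f x, y - x⟫ 0 := by
    have hfg : HasGradientAt f (gradient f x) x := (hf x).hasGradientAt
    have hF := hfg.hasFDerivAt
    have hF0 : HasFDerivAt f ((InnerProductSpace.toDual ℝ _) (gradient f x))
        (x + (0:ℝ) • (y - x)) := by
      rw [show x + (0:ℝ) • (y - x) = x by simp]; exact hF
    have := hF0.comp_hasDerivAt (x := (0:ℝ)) hc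
    have heq : (f ∘ fun t : ℝ => x + t • (y - x)) = g := by
      funext t
      simp [hg, AffineMap.lineMap_apply_module]
      ring_nf
      congr 1
      module
    rw [heq] at this
    simpa [InnerProductSpace.toDual_apply_apply] using this
  have hle := hgconv.le_slope_of_hasDerivAt (Set.mem_univ (0:ℝ)) (Set.mem_univ (1:ℝ))
    one_pos hgd
  have hslope : slope g 0 1 = f y - f x := by
    simp [slope, hg, AffineMap.lineMap_apply_module]
  rw [hslope] at hle
  exact hle

/-- One normalized gradient descent step under convexity and `(L₀,L₁)`-smoothness:
with `η ≤ ‖∇f(x)‖/(2(L₀ + L₁‖∇f(x)‖))`, `f(x⁺) ≤ f(x) - (η/2)‖∇f(x)‖`; consequently if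
`‖x - x*‖ ≤ R` then `f(x⁺) - f* ≤ (1 - η/(2R))(f(x) - f*)`. -/
theorem stmt10 (d : ℕ) (f : EuclideanSpace ℝ (Fin d) → ℝ) (L₀ L₁ : ℝ)
    (hL₀ : 0 ≤ L₀) (hL₁ : 0 < L₁)
    (hconv : ConvexOn ℝ Set.univ f) (hf : Differentiable ℝ f)
    (hsmooth : ∀ x y : EuclideanSpace ℝ (Fin d), ‖y - x‖ ≤ 1 / L₁ →
      f y ≤ f x + ⟪gradient f x, y - x⟫ + (L₀ + L₁ * ‖gradient f x‖) / 2 * ‖y - x‖ ^ 2)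
    (xstar : EuclideanSpace ℝ (Fin d)) (hmin : ∀ y, f xstar ≤ f y)
    (x : EuclideanSpace ℝ (Fin d)) (hgrad : gradient f x ≠ 0)
    (η R : ℝ) (hη : 0 < η) (hR : 0 < R)
    (hηle : η ≤ ‖gradient f x‖ / (2 * (L₀ + L₁ * ‖gradient f x‖))) :
    f (x - (η / ‖gradient f x‖) • gradient f x) ≤ f x - (η / 2) * ‖gradient f x‖ ∧
      (‖x - xstar‖ ≤ R →
        f (x - (η / ‖gradient f x‖) • gradient f x) - f xstar
          ≤ (1 - η / (2 * R)) * (f x - f xstar)) := by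
  set g := gradient f x with hgdef
  set G := ‖g‖ with hGdef
  have hG : 0 < G := norm_pos_iff.mpr hgrad
  set y := x - (η / G) • g with hy
  set D := L₀ + L₁ * G with hD
  have hDpos : 0 < D := by positivity
  have hηle' : η ≤ G / (2 * D) := hηle
  have hnorm : ‖y - x‖ = η := by
    have : y - x = -((η / G) • g) := by rw [hy]; abel
    rw [this, norm_neg, norm_smul, Real.norm_eq_abs,
      abs_of_pos (div_pos hη hG)]
    field_simp
    exact hGdef.symm
  have hηL : η ≤ 1 / L₁ := by
    have h1 : G / (2 * D) ≤ 1 / L₁ := by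
      rw [div_le_div_iff₀ (by positivity) hL₁]
      nlinarith
    linarith
  have hstep : f y ≤ f x - (η / 2) * G := by
    have hs := hsmooth x y (by rw [hnorm]; exact hηL)
    have hinner : ⟪g, y - x⟫ = -(η * G) := by
      have : y - x = -((η / G) • g) := by rw [hy]; abel
      rw [this, inner_neg_right, real_inner_smul_right, real_inner_self_eq_norm_sq]
      field_simp
      ring
    rw [hinner, hnorm] at hs
    have hmul : η * (2 * D) ≤ G := (le_div_iff₀ (by positivity)).mp hηle'
    have hq : D / 2 * η ^ 2 ≤ η * G / 4 := by nlinarith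
    rw [show L₀ + L₁ * ‖gradient f x‖ = D from rfl] at hs
    nlinarith
  refine ⟨hstep, fun hRx => ?_⟩
  have hgi := convex_grad_ineq hconv hf x xstar
  have hix : ⟪g, x - xstar⟫ ≤ G * ‖x - xstar‖ := by
    have := real_inner_le_norm g (x - xstar)
    simpa using this
  have hfx : f x - f xstar ≤ G * R := by
    have h1 : f x - f xstar ≤ ⟪g, x - xstar⟫ := by
      have : ⟪g, xstar - x⟫ = -⟪g, x - xstar⟫ := by
        rw [← inner_neg_right]; congr 1; abel
      linarith [hgi, this ▸ hgi]
    have h2 : G * ‖x - xstar‖ ≤ G * R := by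
      exact mul_le_mul_of_nonneg_left hRx (le_of_lt hG)
    linarith
  have hfx0 : 0 ≤ f x - f xstar := sub_nonneg.mpr (hmin x)
  have key : (η / (2 * R)) * (f x - f xstar) ≤ (η / 2) * G := by
    rw [div_mul_eq_mul_div, div_le_iff₀ (by positivity)]
    have : η * (f x - f xstar) ≤ η * (G * R) := mul_le_mul_of_nonneg_left hfx hη.le
    nlinarith
  nlinarith [hstep]
end

section
/- Let f : R^d → R be convex, differentiable, (L₀,L₁)-smooth with minimizer x*, and let c > 0. Consider a deterministic clipped gradient step x⁺ = x - η·clip_c(∇f(x)) where ‖∇f(x)‖ ≥ c and η ≤ 1/(4(L₀ + L₁c)). Then f(x⁺) ≤ f(x) - (ηc/4)‖∇f(x)‖, and hence if ‖x - x*‖ ≤ R then f(x⁺) - f* ≤ (1 - ηc/(4R))(f(x) - f*). -/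
open scoped RealInnerProductSpace

/-- The clipping operator `clip_c(v) = min{1, c/‖v‖}·v`. -/
noncomputable def clip {d : ℕ} (c : ℝ) (v : EuclideanSpace ℝ (Fin d)) :
    EuclideanSpace ℝ (Fin d) :=
  min 1 (c / ‖v‖) • v

-- convexity gradient inequality
lemma conv_grad_ineq {d : ℕ} {f : EuclideanSpace ℝ (Fin d) → ℝ}
    (hconv : ConvexOn ℝ Set.univ f) (hf : Differentiable ℝ f)
    (x y : EuclideanSpace ℝ (Fin d)) :
    f x + ⟪gradient f x, y - x⟫ ≤ f y := by
  set v := y - x with hv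
  have hline : HasDerivAt (fun t : ℝ => x + t • v) v 0 := by
    simpa using ((hasDerivAt_id (0:ℝ)).smul_const v).const_add x
  have hgrad : HasGradientAt f (gradient f x) x := (hf x).hasGradientAt
  have hfd : HasFDerivAt f (InnerProductSpace.toDual ℝ _ (gradient f x)) x :=
    hasGradientAt_iff_hasFDerivAt.mp hgrad
  have hfd' : HasFDerivAt f (InnerProductSpace.toDual ℝ _ (gradient f x)) (x + (0:ℝ) • v) := by
    simpa using hfd
  have hderiv : HasDerivAt (fun t : ℝ => f (x + t • v)) ⟪gradient f x, v⟫ 0 := by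
    have h := hfd'.comp_hasDerivAt (0:ℝ) hline
    simp only [InnerProductSpace.toDual_apply_apply] at h
    exact h
  have hφ : ConvexOn ℝ Set.univ (fun t : ℝ => f (x + t • v)) := by
    have := hconv.comp_affineMap (AffineMap.lineMap x (x + v))
    have h2 : ∀ t : ℝ, (AffineMap.lineMap x (x + v)) t = x + t • v := by
      intro t; simp [AffineMap.lineMap_apply]; module
    have hfun : (f ∘ ⇑(AffineMap.lineMap x (x + v))) = fun t : ℝ => f (x + t • v) :=
      funext fun t => by rw [Function.comp_apply, h2 t]
    have h3 := this.subset (Set.subset_univ _) convex_univ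
    rwa [hfun] at h3
  have hslope := hφ.le_slope_of_hasDerivAt (Set.mem_univ (0:ℝ)) (Set.mem_univ (1:ℝ))
    zero_lt_one hderiv
  simp [slope_def_field] at hslope
  have : ⟪gradient f x, v⟫ ≤ f (x + v) - f x := by
    simpa [div_one] using hslope
  have hxv : x + v = y := by simp [hv]
  rw [hxv] at this
  linarith

set_option maxHeartbeats 800000 in
/-- One deterministic clipped gradient step under convexity and `(L₀,L₁)`-smoothness:
with `‖∇f(x)‖ ≥ c` and `η ≤ 1/(4(L₀ + L₁c))`, `f(x⁺) ≤ f(x) - (ηc/4)‖∇f(x)‖`; hence if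
`‖x - x*‖ ≤ R` then `f(x⁺) - f* ≤ (1 - ηc/(4R))(f(x) - f*)`. -/
theorem stmt11 (d : ℕ) (f : EuclideanSpace ℝ (Fin d) → ℝ) (L₀ L₁ c : ℝ)
    (hL₀ : 0 ≤ L₀) (hL₁ : 0 < L₁) (hc : 0 < c)
    (hconv : ConvexOn ℝ Set.univ f) (hf : Differentiable ℝ f)
    (hsmooth : ∀ x y : EuclideanSpace ℝ (Fin d), ‖y - x‖ ≤ 1 / L₁ →
      f y ≤ f x + ⟪gradient f x, y - x⟫ + (L₀ + L₁ * ‖gradient f x‖) / 2 * ‖y - x‖ ^ 2)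
    (xstar : EuclideanSpace ℝ (Fin d)) (hmin : ∀ y, f xstar ≤ f y)
    (x : EuclideanSpace ℝ (Fin d)) (hgrad : c ≤ ‖gradient f x‖)
    (η R : ℝ) (hη : 0 < η) (hR : 0 < R) (hηle : η ≤ 1 / (4 * (L₀ + L₁ * c))) :
    f (x - η • clip c (gradient f x)) ≤ f x - (η * c / 4) * ‖gradient f x‖ ∧
      (‖x - xstar‖ ≤ R →
        f (x - η • clip c (gradient f x)) - f xstar
          ≤ (1 - η * c / (4 * R)) * (f x - f xstar)) := by
  set g := gradient f x with hg
  set n := ‖g‖ with hn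
  have hn0 : 0 < n := lt_of_lt_of_le hc hgrad
  have hLc : 0 < L₀ + L₁ * c := by positivity
  have h1 : η * (L₀ + L₁ * c) ≤ 1 / 4 := by
    rw [le_div_iff₀ (by positivity : (0:ℝ) < 4 * (L₀ + L₁ * c))] at hηle
    linarith
  -- clip simplification
  have hclip : clip c g = (c / n) • g := by
    rw [clip, min_eq_right]
    exact div_le_one_of_le₀ hgrad (norm_nonneg _)
  set y := x - η • clip c g with hy
  have hyx : y - x = (-(η * (c / n))) • g := by
    rw [hy, hclip, smul_smul]; module
  have hnyx : ‖y - x‖ = η * c := by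
    rw [hyx, norm_smul]
    simp only [norm_neg, Real.norm_eq_abs, abs_of_nonneg (by positivity : (0:ℝ) ≤ η * (c / n))]
    field_simp
    exact hn.symm
  have hstep : ‖y - x‖ ≤ 1 / L₁ := by
    rw [hnyx, le_div_iff₀ hL₁]
    nlinarith
  have hinner : ⟪g, y - x⟫ = -(η * c * n) := by
    rw [hyx, real_inner_smul_right, real_inner_self_eq_norm_sq, ← hn]
    field_simp
  have hsm := hsmooth x y hstep
  rw [← hg, ← hn, hinner, hnyx] at hsm
  have hcn : c ≤ n := hgrad
  have hA1 : η * L₀ ≤ 1/4 := by nlinarith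
  have hA2 : η * L₁ * c ≤ 1/4 := by nlinarith
  have part1 : f y ≤ f x - (η * c / 4) * n := by
    nlinarith [mul_le_mul_of_nonneg_right hA1 (show (0:ℝ) ≤ η * c^2 by positivity),
      mul_le_mul_of_nonneg_right hA2 (show (0:ℝ) ≤ η * c * n by positivity),
      mul_le_mul_of_nonneg_right hcn (show (0:ℝ) ≤ η * c by positivity)]
  refine ⟨part1, fun hxR => ?_⟩
  have hA : f x - f xstar ≤ n * R := by
    have h2 := conv_grad_ineq hconv hf x xstar
    have h3 : ⟪g, xstar - x⟫ ≥ -(n * ‖xstar - x‖) := by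
      have hb := abs_real_inner_le_norm g (xstar - x)
      have hp := neg_abs_le (⟪g, xstar - x⟫)
      rw [← hn] at hb
      linarith [le_abs_self (⟪g, xstar - x⟫)]
    have h4 : ‖xstar - x‖ ≤ R := by rwa [norm_sub_rev] at hxR
    have h5 : n * ‖xstar - x‖ ≤ n * R :=
      mul_le_mul_of_nonneg_left h4 (le_of_lt hn0)
    linarith
  have hfx : f xstar ≤ f x := hmin x
  have hfy : f xstar ≤ f y := hmin y
  have hDR : 0 < η * c / 4 := by positivity
  -- f y - f* ≤ (fx - f*) - D n ≤ (1 - D/R)(fx - f*)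
  have key : (η * c / 4) * ((f x - f xstar) / R) ≤ (η * c / 4) * n := by
    apply mul_le_mul_of_nonneg_left _ (le_of_lt hDR)
    rw [div_le_iff₀ hR]
    linarith
  have : f y - f xstar ≤ (f x - f xstar) - (η * c / 4) * ((f x - f xstar) / R) := by
    linarith
  calc f y - f xstar ≤ (f x - f xstar) - (η * c / 4) * ((f x - f xstar) / R) := this
    _ = (1 - η * c / (4 * R)) * (f x - f xstar) := by field_simp
end

section
/- Let f : R^d → R be convex, differentiable, (L₀,L₁)-smooth with minimizer x*, R = ‖x⁰ - x*‖, and λ > 0. Consider a single normalized step x⁺ = x - η·G/‖G‖ where G ∈ R^d is any nonzero vector with ‖G‖ ≤ λ and ‖∇f(x)‖ ≥ λ, and η ≤ λ/(2(L₀ + L₁λ)). If G is a random vector of the form G = ∇f(x,ξ) + b(x) with E[∇f(x,ξ)] = ∇f(x), E‖∇f(x,ξ) - ∇f(x)‖² ≤ σ²/B and ‖b(x)‖ ≤ ζ, then E[f(x⁺)] ≤ f(x) - (η/4)‖∇f(x)‖ + ηλ/2 + ηζ²/λ. -/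
open MeasureTheory
open scoped RealInnerProductSpace

lemma key_poly16 (t q β ζ c lam : ℝ) (hlam : 0 < lam) (ht : lam ≤ t)
    (hq0 : 0 ≤ q) (hβ0 : 0 ≤ β) (hβζ : β ≤ ζ) (htq : t ≤ q + β)
    (hc : q ^ 2 = t ^ 2 + 2 * c + β ^ 2) :
    -(t ^ 2 + c) + t * (lam - q) ≤ lam * (-(t / 2)) + lam * (lam / 2) + ζ ^ 2 := by
  nlinarith [sq_nonneg (q - t + ζ), sq_nonneg (ζ - t), sq_nonneg (t + q),
    mul_nonneg (by linarith : (0:ℝ) ≤ 2 * t - lam) (by linarith : (0:ℝ) ≤ t - lam),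
    mul_le_mul_of_nonneg_left hβζ hβ0, sq_nonneg (t - q)]

set_option maxHeartbeats 1000000 in
/-- Per-step estimate for biased NSGD in the case `‖∇f(x)‖ ≥ λ`, `‖G‖ ≤ λ`: for a normalized
step `x⁺ = x - η·G/‖G‖` with `G = ∇f(x,ξ) + b(x)`, unbiased stochastic gradient with variance
`σ²/B` and bias bound `‖b(x)‖ ≤ ζ`, and `η ≤ λ/(2(L₀ + L₁λ))`,
`E[f(x⁺)] ≤ f(x) - (η/4)‖∇f(x)‖ + ηλ/2 + ηζ²/λ`. -/
theorem stmt16 {Ω : Type*} [MeasurableSpace Ω] (μ : Measure Ω) [IsProbabilityMeasure μ]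
    (d : ℕ) (f : EuclideanSpace ℝ (Fin d) → ℝ) (L₀ L₁ lam σ B ζ η : ℝ)
    (hL₀ : 0 ≤ L₀) (hL₁ : 0 < L₁) (hlam : 0 < lam) (hB : 0 < B) (hζ : 0 ≤ ζ)
    (hconv : ConvexOn ℝ Set.univ f) (hf : Differentiable ℝ f)
    (hsmooth : ∀ x y : EuclideanSpace ℝ (Fin d), ‖y - x‖ ≤ 1 / L₁ →
      f y ≤ f x + ⟪gradient f x, y - x⟫ + (L₀ + L₁ * ‖gradient f x‖) / 2 * ‖y - x‖ ^ 2)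
    (xstar : EuclideanSpace ℝ (Fin d)) (hmin : ∀ y, f xstar ≤ f y)
    (x : EuclideanSpace ℝ (Fin d)) (hgradge : lam ≤ ‖gradient f x‖)
    (gf : Ω → EuclideanSpace ℝ (Fin d)) (hgf : Integrable gf μ)
    (hunbiased : ∫ ω, gf ω ∂μ = gradient f x)
    (hvar : ∫ ω, ‖gf ω - gradient f x‖ ^ 2 ∂μ ≤ σ ^ 2 / B)
    (bvec : EuclideanSpace ℝ (Fin d)) (hb : ‖bvec‖ ≤ ζ)
    (G : Ω → EuclideanSpace ℝ (Fin d)) (hG : ∀ ω, G ω = gf ω + bvec)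
    (hGne : ∀ ω, G ω ≠ 0) (hGle : ∀ ω, ‖G ω‖ ≤ lam)
    (hη : 0 < η) (hηle : η ≤ lam / (2 * (L₀ + L₁ * lam)))
    (hint : Integrable (fun ω => f (x - η • (‖G ω‖⁻¹ • G ω))) μ) :
    ∫ ω, f (x - η • (‖G ω‖⁻¹ • G ω)) ∂μ
      ≤ f x - (η / 4) * ‖gradient f x‖ + η * lam / 2 + η * ζ ^ 2 / lam := by
  set g := gradient f x with hg
  set t := ‖g‖ with htdef
  have ht : lam ≤ t := hgradge
  have ht0 : 0 < t := lt_of_lt_of_le hlam ht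
  have hLpos : 0 < L₀ + L₁ * lam := add_pos_of_nonneg_of_pos hL₀ (mul_pos hL₁ hlam)
  have hη1 : 2 * η * (L₀ + L₁ * lam) ≤ lam := by
    have h := (le_div_iff₀ (by positivity)).mp hηle
    nlinarith [h]
  have hηL₁ : η * L₁ ≤ 1 / 2 := by
    nlinarith [mul_nonneg hη.le hL₀, hlam]
  have hη2 : η ≤ 1 / L₁ := by
    rw [le_div_iff₀ hL₁]; linarith
  -- pointwise bound
  have hpt : ∀ ω, f (x - η • (‖G ω‖⁻¹ • G ω)) ≤
      (f x + (η / 4) * t + η * t) + (-(η / lam)) * ⟪g, G ω⟫ + (-(η * t / lam)) * ‖G ω‖ := by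
    intro ω
    set r := ‖G ω‖ with hrdef
    have hr : 0 < r := norm_pos_iff.mpr (hGne ω)
    have hrle : r ≤ lam := hGle ω
    have hsub : x - η • (r⁻¹ • G ω) - x = -(η • (r⁻¹ • G ω)) := sub_sub_cancel_left x _
    have hnorm : ‖x - η • (r⁻¹ • G ω) - x‖ = η := by
      rw [hsub, norm_neg, norm_smul, norm_smul, norm_inv, norm_norm, Real.norm_eq_abs,
        abs_of_pos hη]
      field_simp
      exact div_self hr.ne'
    have hs := hsmooth x (x - η • (r⁻¹ • G ω)) (by rw [hnorm]; exact hη2)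
    have hip : ⟪g, x - η • (r⁻¹ • G ω) - x⟫ = -(η * (r⁻¹ * ⟪g, G ω⟫)) := by
      rw [hsub, inner_neg_right, real_inner_smul_right, real_inner_smul_right]
    rw [← hg, hip, hnorm] at hs
    set s := ⟪g, G ω⟫ with hsdef
    have habs := abs_real_inner_le_norm g (G ω)
    have hslb : -(t * r) ≤ s := by
      have := (abs_le.mp habs).1
      simpa using this
    have hsub2 : s ≤ t * r := by
      have := (abs_le.mp habs).2
      simpa using this
    have hquad1 : η * (L₀ + L₁ * t) ≤ t / 2 := by
      nlinarith [mul_le_mul_of_nonneg_right hηL₁ (by linarith : (0:ℝ) ≤ t - lam)]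
    have hquad : (L₀ + L₁ * t) / 2 * η ^ 2 ≤ (η / 4) * t := by
      nlinarith [mul_le_mul_of_nonneg_left hquad1 hη.le]
    have hkey : 0 ≤ η * ((lam - r) * (s + t * r)) :=
      mul_nonneg hη.le (mul_nonneg (by linarith) (by linarith))
    have e : -(η / lam) * s + (η * t / lam) * (lam - r) - (-(η * (r⁻¹ * s)))
        = η * ((lam - r) * (s + t * r)) / (lam * r) := by
      field_simp
      ring
    have hlin : -(η * (r⁻¹ * s)) ≤ -(η / lam) * s + (η * t / lam) * (lam - r) := by
      have hdiv : 0 ≤ η * ((lam - r) * (s + t * r)) / (lam * r) :=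
        div_nonneg hkey (by positivity)
      linarith [e, hdiv]
    have e2 : (-(η * t / lam)) * r = (η * t / lam) * (lam - r) - η * t := by
      field_simp; ring
    linarith [hs, hquad, hlin, e2]
  -- integrability
  have hGint : Integrable G μ := by
    have hfe : G = fun ω => gf ω + bvec := funext hG
    rw [hfe]; exact hgf.add (integrable_const _)
  have hinner : Integrable (fun ω => ⟪g, G ω⟫) μ := hGint.const_inner g
  have hnormint : Integrable (fun ω => ‖G ω‖) μ := hGint.norm
  have hRHSint : Integrable (fun ω =>
      (f x + (η / 4) * t + η * t) + (-(η / lam)) * ⟪g, G ω⟫ + (-(η * t / lam)) * ‖G ω‖) μ :=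
    ((integrable_const _).add (hinner.const_mul _)).add (hnormint.const_mul _)
  have hmono := integral_mono hint hRHSint hpt
  -- compute the integral of the RHS
  have hEG : ∫ ω, G ω ∂μ = g + bvec := by
    have hfe : G = fun ω => gf ω + bvec := funext hG
    rw [hfe, integral_add hgf (integrable_const _), hunbiased, integral_const]
    simp
  have hIinner : ∫ ω, ⟪g, G ω⟫ ∂μ = ⟪g, g + bvec⟫ := by
    rw [integral_inner hGint, hEG]
  set I := ∫ ω, ‖G ω‖ ∂μ with hIdef
  have hIq : ‖g + bvec‖ ≤ I := by
    rw [← hEG]; exact norm_integral_le_integral_norm G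
  have hA : Integrable (fun ω => (f x + (η / 4) * t + η * t) + (-(η / lam)) * ⟪g, G ω⟫) μ :=
    (integrable_const _).add (hinner.const_mul _)
  have hB2 : Integrable (fun ω => (-(η * t / lam)) * ‖G ω‖) μ := hnormint.const_mul _
  have hERHS : ∫ ω, ((f x + (η / 4) * t + η * t) + (-(η / lam)) * ⟪g, G ω⟫
        + (-(η * t / lam)) * ‖G ω‖) ∂μ
      = (f x + (η / 4) * t + η * t) + (-(η / lam)) * ⟪g, g + bvec⟫ + (-(η * t / lam)) * I := by
    rw [integral_add hA hB2, integral_add (integrable_const _) (hinner.const_mul _),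
      integral_const, integral_const_mul, integral_const_mul, hIinner]
    simp
    exact Or.inl rfl
  -- final arithmetic
  set q := ‖g + bvec‖ with hqdef
  set β := ‖bvec‖ with hβdef
  set c := ⟪g, bvec⟫ with hcdef
  have hqc : q ^ 2 = t ^ 2 + 2 * c + β ^ 2 := by
    rw [hqdef, htdef, hβdef, hcdef]
    exact norm_add_sq_real g bvec
  have hinner_exp : ⟪g, g + bvec⟫ = t ^ 2 + c := by
    rw [inner_add_right, real_inner_self_eq_norm_sq]
  have htq : t ≤ q + β := by
    have h := norm_sub_norm_le g (g + bvec)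
    have h2 : g - (g + bvec) = -bvec := by abel
    rw [h2, norm_neg] at h
    linarith
  have hkey := key_poly16 t q β ζ c lam hlam ht (norm_nonneg _) (norm_nonneg _) hb htq hqc
  have hfrac : (0:ℝ) ≤ η / lam := (div_pos hη hlam).le
  have main := mul_le_mul_of_nonneg_left hkey hfrac
  have eL : (η / lam) * (-(t ^ 2 + c) + t * (lam - q))
      = (-(η / lam)) * (t ^ 2 + c) + η * t - (η * t / lam) * q := by
    field_simp; ring
  have eR : (η / lam) * (lam * (-(t / 2)) + lam * (lam / 2) + ζ ^ 2)
      = -(η / 2) * t + η * lam / 2 + η * ζ ^ 2 / lam := by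
    field_simp
  have hBI : (-(η * t / lam)) * I ≤ (-(η * t / lam)) * q := by
    have hcc : (0:ℝ) ≤ η * t / lam := by positivity
    nlinarith [mul_le_mul_of_nonneg_left hIq hcc]
  rw [hinner_exp] at hERHS
  linarith [hmono, hERHS, hBI, main, eL, eR]
end
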